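/- Under the diagonal dominance assumption |b| ≤ min(σ₁², σ₂²), if a grid function {U_{ij}^n} satisfies L_h U_{ij}^n ≥ 0 at all interior points and time steps n ≥ 1 (where L_h U^n = δ_t U^n - (σ₁²/2)δ_x²U^n - (σ₂²/2)δ_y²U^n - b δ^α_{xy}U^n with δ_t U^n = (U^n - U^{n-1})/Δt), then the minimum of U over all grid points and times is attained at a point with n = 0 or on the spatial boundary. -/
import Mathlib


/-- The discrete parabolic operator
L_h U = δ_t U - (σ₁²/2)δ_x²U - (σ₂²/2)δ_y²U - b δ^α_{xy}U at node (i,j), where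
`Un` is the current time level, `Up` the previous one, and α = + iff b ≥ 0. -/
noncomputable def LhT (s1 s2 b Δt h : ℝ) (Un Up : ℤ → ℤ → ℝ) (i j : ℤ) : ℝ :=
  (Un i j - Up i j) / Δt
    - s1 / 2 * ((Un (i + 1) j - 2 * Un i j + Un (i - 1) j) / h ^ 2)
    - s2 / 2 * ((Un i (j + 1) - 2 * Un i j + Un i (j - 1)) / h ^ 2)
    - b * (if 0 ≤ b then
        (Un (i + 1) (j + 1) + 2 * Un i j + Un (i - 1) (j - 1)
          - Un (i + 1) j - Un (i - 1) j - Un i (j + 1) - Un i (j - 1))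
          / (2 * h ^ 2)
      else
        (Un (i + 1) j + Un (i - 1) j + Un i (j + 1) + Un i (j - 1)
          - Un (i + 1) (j - 1) - 2 * Un i j - Un (i - 1) (j + 1))
          / (2 * h ^ 2))

lemma key_pos (s1 s2 b h u A C B D E F : ℝ) (hh : 0 < h) :
    s1 / 2 * ((A - 2 * u + C) / h ^ 2) + s2 / 2 * ((B - 2 * u + D) / h ^ 2)
      + b * ((E + 2 * u + F - A - C - B - D) / (2 * h ^ 2))
    = ((s1 - b) * ((A - u) + (C - u)) + (s2 - b) * ((B - u) + (D - u))
        + b * ((E - u) + (F - u))) / (2 * h ^ 2) := by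
  have h2 : (h : ℝ) ^ 2 ≠ 0 := by positivity
  field_simp
  ring

lemma key_neg (s1 s2 b h u A C B D G H : ℝ) (hh : 0 < h) :
    s1 / 2 * ((A - 2 * u + C) / h ^ 2) + s2 / 2 * ((B - 2 * u + D) / h ^ 2)
      + b * ((A + C + B + D - G - 2 * u - H) / (2 * h ^ 2))
    = ((s1 + b) * ((A - u) + (C - u)) + (s2 + b) * ((B - u) + (D - u))
        + (-b) * ((G - u) + (H - u))) / (2 * h ^ 2) := by
  have h2 : (h : ℝ) ^ 2 ≠ 0 := by positivity
  field_simp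
  ring

set_option maxHeartbeats 2000000 in
/-- Discrete maximum principle: if L_h U^n ≥ 0 at all interior points for
1 ≤ n ≤ N, the minimum of U over the space-time grid is attained at a point
with n = 0 or on the spatial boundary. -/
theorem discrete_maximum_principle (s1 s2 b Δt h : ℝ) (M N : ℕ)
    (hs1 : 0 < s1) (hs2 : 0 < s2) (hΔt : 0 < Δt) (hh : 0 < h)
    (hb1 : |b| ≤ s1) (hb2 : |b| ≤ s2) (hM : 2 ≤ M) (hN : 1 ≤ N)
    (U : ℕ → ℤ → ℤ → ℝ)
    (hL : ∀ n, 1 ≤ n → n ≤ N → ∀ i j : ℤ,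
      0 < i → i < (M : ℤ) → 0 < j → j < (M : ℤ) →
      0 ≤ LhT s1 s2 b Δt h (U n) (U (n - 1)) i j) :
    ∃ n : ℕ, ∃ i j : ℤ, n ≤ N ∧ 0 ≤ i ∧ i ≤ (M : ℤ) ∧ 0 ≤ j ∧ j ≤ (M : ℤ) ∧
      (n = 0 ∨ i = 0 ∨ i = (M : ℤ) ∨ j = 0 ∨ j = (M : ℤ)) ∧
      ∀ m : ℕ, ∀ k l : ℤ, m ≤ N → 0 ≤ k → k ≤ (M : ℤ) → 0 ≤ l → l ≤ (M : ℤ) →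
        U n i j ≤ U m k l := by
  classical
  -- global minimum over the finite space-time grid
  set S : Finset (ℕ × ℤ × ℤ) :=
    Finset.range (N + 1) ×ˢ Finset.Icc 0 (M : ℤ) ×ˢ Finset.Icc 0 (M : ℤ) with hS
  have hSne : S.Nonempty := ⟨(0, 0, 0), by simp [hS]⟩
  obtain ⟨p, hpS, hpmin⟩ := S.exists_min_image (fun q => U q.1 q.2.1 q.2.2) hSne
  set μ := U p.1 p.2.1 p.2.2 with hμ
  have hmin : ∀ m (k l : ℤ), m ≤ N → 0 ≤ k → k ≤ (M : ℤ) → 0 ≤ l → l ≤ (M : ℤ) →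
      μ ≤ U m k l := by
    intro m k l hm hk1 hk2 hl1 hl2
    exact hpmin (m, k, l) (by simp [hS]; omega)
  have hpmem : p.1 ≤ N ∧ 0 ≤ p.2.1 ∧ p.2.1 ≤ (M : ℤ) ∧ 0 ≤ p.2.2 ∧ p.2.2 ≤ (M : ℤ) := by
    simp [hS] at hpS; omega
  have hP : ∃ n, n ≤ N ∧ ∃ i j : ℤ, 0 ≤ i ∧ i ≤ (M : ℤ) ∧ 0 ≤ j ∧ j ≤ (M : ℤ) ∧
      U n i j ≤ μ :=
    ⟨p.1, hpmem.1, p.2.1, p.2.2, hpmem.2.1, hpmem.2.2.1, hpmem.2.2.2.1,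
      hpmem.2.2.2.2, le_refl _⟩
  set n0 := Nat.find hP with hn0
  obtain ⟨hn0N, i0, j0, hi0, hi0M, hj0, hj0M, hle⟩ := Nat.find_spec hP
  -- The minimum is attained at (n0, i0, j0)
  have hmain : ∀ m : ℕ, ∀ k l : ℤ, m ≤ N → 0 ≤ k → k ≤ (M : ℤ) → 0 ≤ l →
      l ≤ (M : ℤ) → U n0 i0 j0 ≤ U m k l := by
    intro m k l hm hk1 hk2 hl1 hl2
    exact hle.trans (hmin m k l hm hk1 hk2 hl1 hl2)
  -- if the point is at n = 0 or on the boundary we are done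
  by_cases hcase : n0 = 0 ∨ i0 = 0 ∨ i0 = (M : ℤ) ∨ j0 = 0 ∨ j0 = (M : ℤ)
  · exact ⟨n0, i0, j0, hn0N, hi0, hi0M, hj0, hj0M, hcase, hmain⟩
  push_neg at hcase
  obtain ⟨hne0, hine0, hineM, hjne0, hjneM⟩ := hcase
  -- interior point: derive a minimizer at time n0 - 1, contradicting minimality
  exfalso
  have hn1 : 1 ≤ n0 := Nat.one_le_iff_ne_zero.mpr hne0
  have hii : 0 < i0 := lt_of_le_of_ne hi0 (Ne.symm hine0)
  have hiiM : i0 < (M : ℤ) := lt_of_le_of_ne hi0M hineM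
  have hjj : 0 < j0 := lt_of_le_of_ne hj0 (Ne.symm hjne0)
  have hjjM : j0 < (M : ℤ) := lt_of_le_of_ne hj0M hjneM
  have hLh := hL n0 hn1 hn0N i0 j0 hii hiiM hjj hjjM
  set u := U n0 i0 j0 with hu
  have huμ : u = μ := le_antisymm hle (hmin n0 i0 j0 hn0N hi0 hi0M hj0 hj0M)
  -- all grid values at time n0 are ≥ u
  have hnb : ∀ k l : ℤ, 0 ≤ k → k ≤ (M : ℤ) → 0 ≤ l → l ≤ (M : ℤ) →
      u ≤ U n0 k l := by
    intro k l hk1 hk2 hl1 hl2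
    rw [huμ]; exact hmin n0 k l hn0N hk1 hk2 hl1 hl2
  have hA : u ≤ U n0 (i0 + 1) j0 := hnb _ _ (by omega) (by omega) hj0 hj0M
  have hC : u ≤ U n0 (i0 - 1) j0 := hnb _ _ (by omega) (by omega) hj0 hj0M
  have hB : u ≤ U n0 i0 (j0 + 1) := hnb _ _ hi0 hi0M (by omega) (by omega)
  have hD : u ≤ U n0 i0 (j0 - 1) := hnb _ _ hi0 hi0M (by omega) (by omega)
  have hE : u ≤ U n0 (i0 + 1) (j0 + 1) := hnb _ _ (by omega) (by omega) (by omega) (by omega)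
  have hF : u ≤ U n0 (i0 - 1) (j0 - 1) := hnb _ _ (by omega) (by omega) (by omega) (by omega)
  have hG : u ≤ U n0 (i0 + 1) (j0 - 1) := hnb _ _ (by omega) (by omega) (by omega) (by omega)
  have hH : u ≤ U n0 (i0 - 1) (j0 + 1) := hnb _ _ (by omega) (by omega) (by omega) (by omega)
  have h2 : (0 : ℝ) < h ^ 2 := by positivity
  -- the spatial part of the operator is ≥ 0 at the minimum
  unfold LhT at hLh
  have hspace : 0 ≤ (u - U (n0 - 1) i0 j0) / Δt := by
    rcases le_or_gt 0 b with hbpos | hbneg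
    · rw [if_pos hbpos] at hLh
      have hb1' : b ≤ s1 := (abs_le.mp hb1).2
      have hb2' : b ≤ s2 := (abs_le.mp hb2).2
      have key : s1 / 2 * ((U n0 (i0 + 1) j0 - 2 * u + U n0 (i0 - 1) j0) / h ^ 2)
          + s2 / 2 * ((U n0 i0 (j0 + 1) - 2 * u + U n0 i0 (j0 - 1)) / h ^ 2)
          + b * ((U n0 (i0 + 1) (j0 + 1) + 2 * u + U n0 (i0 - 1) (j0 - 1)
              - U n0 (i0 + 1) j0 - U n0 (i0 - 1) j0 - U n0 i0 (j0 + 1)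
              - U n0 i0 (j0 - 1)) / (2 * h ^ 2))
          = ((s1 - b) * ((U n0 (i0 + 1) j0 - u) + (U n0 (i0 - 1) j0 - u))
            + (s2 - b) * ((U n0 i0 (j0 + 1) - u) + (U n0 i0 (j0 - 1) - u))
            + b * ((U n0 (i0 + 1) (j0 + 1) - u) + (U n0 (i0 - 1) (j0 - 1) - u)))
            / (2 * h ^ 2) := key_pos s1 s2 b h u _ _ _ _ _ _ hh
      have hnum : 0 ≤ (s1 - b) * ((U n0 (i0 + 1) j0 - u) + (U n0 (i0 - 1) j0 - u))
          + (s2 - b) * ((U n0 i0 (j0 + 1) - u) + (U n0 i0 (j0 - 1) - u))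
          + b * ((U n0 (i0 + 1) (j0 + 1) - u) + (U n0 (i0 - 1) (j0 - 1) - u)) := by
        have t1 : 0 ≤ (s1 - b) * ((U n0 (i0 + 1) j0 - u) + (U n0 (i0 - 1) j0 - u)) :=
          mul_nonneg (by linarith) (by linarith)
        have t2 : 0 ≤ (s2 - b) * ((U n0 i0 (j0 + 1) - u) + (U n0 i0 (j0 - 1) - u)) :=
          mul_nonneg (by linarith) (by linarith)
        have t3 : 0 ≤ b * ((U n0 (i0 + 1) (j0 + 1) - u) + (U n0 (i0 - 1) (j0 - 1) - u)) :=
          mul_nonneg hbpos (by linarith)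
        linarith
      have hdiff : 0 ≤ s1 / 2 * ((U n0 (i0 + 1) j0 - 2 * u + U n0 (i0 - 1) j0) / h ^ 2)
          + s2 / 2 * ((U n0 i0 (j0 + 1) - 2 * u + U n0 i0 (j0 - 1)) / h ^ 2)
          + b * ((U n0 (i0 + 1) (j0 + 1) + 2 * u + U n0 (i0 - 1) (j0 - 1)
              - U n0 (i0 + 1) j0 - U n0 (i0 - 1) j0 - U n0 i0 (j0 + 1)
              - U n0 i0 (j0 - 1)) / (2 * h ^ 2)) := by
        rw [key]; exact div_nonneg hnum (by positivity)
      rw [← hu] at hLh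
      linarith
    · rw [if_neg (not_le.mpr hbneg)] at hLh
      have hb1' : -b ≤ s1 := by have := (abs_le.mp hb1).2; have := abs_nonneg b; nlinarith [neg_abs_le b, (abs_le.mp hb1).1]
      have hb2' : -b ≤ s2 := by nlinarith [(abs_le.mp hb2).1]
      have key : s1 / 2 * ((U n0 (i0 + 1) j0 - 2 * u + U n0 (i0 - 1) j0) / h ^ 2)
          + s2 / 2 * ((U n0 i0 (j0 + 1) - 2 * u + U n0 i0 (j0 - 1)) / h ^ 2)
          + b * ((U n0 (i0 + 1) j0 + U n0 (i0 - 1) j0 + U n0 i0 (j0 + 1)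
              + U n0 i0 (j0 - 1) - U n0 (i0 + 1) (j0 - 1) - 2 * u
              - U n0 (i0 - 1) (j0 + 1)) / (2 * h ^ 2))
          = ((s1 + b) * ((U n0 (i0 + 1) j0 - u) + (U n0 (i0 - 1) j0 - u))
            + (s2 + b) * ((U n0 i0 (j0 + 1) - u) + (U n0 i0 (j0 - 1) - u))
            + (-b) * ((U n0 (i0 + 1) (j0 - 1) - u) + (U n0 (i0 - 1) (j0 + 1) - u)))
            / (2 * h ^ 2) := key_neg s1 s2 b h u _ _ _ _ _ _ hh
      have hnum : 0 ≤ (s1 + b) * ((U n0 (i0 + 1) j0 - u) + (U n0 (i0 - 1) j0 - u))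
          + (s2 + b) * ((U n0 i0 (j0 + 1) - u) + (U n0 i0 (j0 - 1) - u))
          + (-b) * ((U n0 (i0 + 1) (j0 - 1) - u) + (U n0 (i0 - 1) (j0 + 1) - u)) := by
        have t1 : 0 ≤ (s1 + b) * ((U n0 (i0 + 1) j0 - u) + (U n0 (i0 - 1) j0 - u)) :=
          mul_nonneg (by linarith) (by linarith)
        have t2 : 0 ≤ (s2 + b) * ((U n0 i0 (j0 + 1) - u) + (U n0 i0 (j0 - 1) - u)) :=
          mul_nonneg (by linarith) (by linarith)
        have t3 : 0 ≤ (-b) * ((U n0 (i0 + 1) (j0 - 1) - u) + (U n0 (i0 - 1) (j0 + 1) - u)) :=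
          mul_nonneg (by linarith) (by linarith)
        linarith
      have hdiff : 0 ≤ s1 / 2 * ((U n0 (i0 + 1) j0 - 2 * u + U n0 (i0 - 1) j0) / h ^ 2)
          + s2 / 2 * ((U n0 i0 (j0 + 1) - 2 * u + U n0 i0 (j0 - 1)) / h ^ 2)
          + b * ((U n0 (i0 + 1) j0 + U n0 (i0 - 1) j0 + U n0 i0 (j0 + 1)
              + U n0 i0 (j0 - 1) - U n0 (i0 + 1) (j0 - 1) - 2 * u
              - U n0 (i0 - 1) (j0 + 1)) / (2 * h ^ 2)) := by
        rw [key]; exact div_nonneg hnum (by positivity)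
      rw [← hu] at hLh
      linarith
  -- hence the previous time level is also a minimizer, contradiction
  have hup : U (n0 - 1) i0 j0 ≤ u := by
    have := mul_nonneg hΔt.le hspace
    rw [mul_div_cancel₀ _ (ne_of_gt hΔt)] at this
    linarith
  have hPP : (n0 - 1) ≤ N ∧ ∃ i j : ℤ, 0 ≤ i ∧ i ≤ (M : ℤ) ∧ 0 ≤ j ∧ j ≤ (M : ℤ) ∧
      U (n0 - 1) i j ≤ μ :=
    ⟨by omega, i0, j0, hi0, hi0M, hj0, hj0M, by rw [← huμ]; exact hup⟩
  exact Nat.find_min hP (by omega : n0 - 1 < n0) hPP
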